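/- arXiv:2401.15556 — 2 statements merged into one kernel-verified Lean document; each statement's English description precedes it below -/
import Mathlib

section
/- A separable Banach space X is not strongly NSS if and only if X has a closed linear subspace topologically isomorphic to c_0. -/
/-!
A normed space fails to be strongly NSS exactly when it contains a sequence that does not tend
to `0` but whose finite subsums are uniformly bounded; the unit vectors of `c₀` are such a
sequence. Conversely, pass to a subsequence with `‖y k‖ ≥ ε` and take norming functionals `f j`.
The matrix `f j (y k)` has rows uniformly bounded in `ℓ¹`, so a compactness and diagonal argument
yields indices along which its off-diagonal row sums are at most `ε / 2`. Along them,
`a ↦ ∑ a k • y k` maps `c₀` into the space, bounded above by the subsum bound and below by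
testing against the diagonal functionals, hence onto a closed subspace isomorphic to `c₀`.
-/

open Filter Topology ZeroAtInfty

/-- `V` is an unenclosed set of the additive group `X`. -/
def UnenclosedAdd (X : Type*) [AddGroup X] [TopologicalSpace X] (V : Set X) : Prop :=
  IsOpen V ∧ (0 : X) ∈ V ∧
    ∀ v : ℕ → X, ¬ Tendsto v atTop (𝓝 0) →
      ∃ (k : ℕ) (n : Fin (k + 1) → ℕ), StrictMono n ∧ (List.ofFn (v ∘ n)).sum ∉ V

/-- An additive Polish group is strongly NSS if it has an unenclosed set. -/
def StronglyNSSAdd (X : Type*) [AddGroup X] [TopologicalSpace X] : Prop :=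
  ∃ V : Set X, UnenclosedAdd X V

theorem List.sum_ofFn_comp_eq_sum_image {M : Type*} [AddCommMonoid M] (v : ℕ → M) {k : ℕ}
    {n : Fin k → ℕ} (hn : Function.Injective n) :
    (List.ofFn (v ∘ n)).sum = ∑ i ∈ Finset.univ.image n, v i := by
  rw [List.sum_ofFn, Finset.sum_image fun i _ j _ h => hn h]
  rfl

theorem forall_strictMono_sum_ofFn_mem_iff {M : Type*} [AddCommMonoid M] (v : ℕ → M) (V : Set M) :
    (∀ (k : ℕ) (n : Fin (k + 1) → ℕ), StrictMono n → (List.ofFn (v ∘ n)).sum ∈ V) ↔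
      ∀ F : Finset ℕ, F.Nonempty → ∑ i ∈ F, v i ∈ V := by
  constructor
  · intro hV F hF
    obtain ⟨k, hk⟩ := Nat.exists_eq_add_one_of_ne_zero hF.card_pos.ne'
    have h := hV k _ (F.orderEmbOfFin hk).strictMono
    rwa [List.sum_ofFn_comp_eq_sum_image v (F.orderEmbOfFin hk).injective,
      F.image_orderEmbOfFin_univ hk] at h
  · intro hV k n hn
    rw [List.sum_ofFn_comp_eq_sum_image v hn.injective]
    exact hV _ (Finset.univ_nonempty.image n)

theorem not_unenclosedAdd_iff {X : Type*} [AddCommGroup X] [TopologicalSpace X] {V : Set X}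
    (hV : IsOpen V) (hV0 : (0 : X) ∈ V) :
    ¬ UnenclosedAdd X V ↔
      ∃ v : ℕ → X, ¬ Tendsto v atTop (𝓝 0) ∧ ∀ F : Finset ℕ, ∑ i ∈ F, v i ∈ V := by
  have hsum (v : ℕ → X) : (∀ F : Finset ℕ, ∑ i ∈ F, v i ∈ V) ↔
      ∀ F : Finset ℕ, F.Nonempty → ∑ i ∈ F, v i ∈ V :=
    ⟨fun h F _ => h F, fun h F => F.eq_empty_or_nonempty.elim (fun hF => hF ▸ hV0) (h F)⟩
  simp only [UnenclosedAdd, hV, hV0, true_and, hsum, ← forall_strictMono_sum_ofFn_mem_iff]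
  push Not
  rfl

theorem exists_norm_sum_le_one_of_not_stronglyNSSAdd {X : Type*} [NormedAddCommGroup X]
    (hX : ¬ StronglyNSSAdd X) :
    ∃ v : ℕ → X, ¬ Tendsto v atTop (𝓝 0) ∧ ∀ F : Finset ℕ, ‖∑ i ∈ F, v i‖ ≤ 1 := by
  have h : ¬ UnenclosedAdd X (Metric.ball 0 1) := fun h => hX ⟨_, h⟩
  obtain ⟨v, hv0, hv⟩ :=
    (not_unenclosedAdd_iff Metric.isOpen_ball (Metric.mem_ball_self one_pos)).1 h
  exact ⟨v, hv0, fun F => (mem_ball_zero_iff.1 (hv F)).le⟩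

theorem not_stronglyNSSAdd_of_norm_sum_le {X : Type*} [NormedAddCommGroup X] [NormedSpace ℝ X]
    {v : ℕ → X} (hv0 : ¬ Tendsto v atTop (𝓝 0)) {C : ℝ}
    (hv : ∀ F : Finset ℕ, ‖∑ i ∈ F, v i‖ ≤ C) : ¬ StronglyNSSAdd X := by
  rintro ⟨V, hV⟩
  obtain ⟨r, hr, hrV⟩ := Metric.isOpen_iff.1 hV.1 0 hV.2.1
  have hC : 0 < C + 1 := by linarith [(norm_nonneg _).trans (hv ∅)]
  set c : ℝ := r / (C + 1)
  refine (not_unenclosedAdd_iff hV.1 hV.2.1).2 ⟨fun i => c • v i, ?_, fun F => hrV ?_⟩ hV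
  · rwa [← smul_zero c, tendsto_const_smul_iff₀ (by positivity)]
  · rw [← Finset.smul_sum, mem_ball_zero_iff, norm_smul, Real.norm_of_nonneg (by positivity)]
    calc c * ‖∑ i ∈ F, v i‖ ≤ c * C := by gcongr; exact hv F
      _ < c * (C + 1) := by gcongr; linarith
      _ = r := div_mul_cancel₀ r hC.ne'

theorem norm_sum_comp_le_of_injective {X : Type*} [SeminormedAddCommGroup X] {y : ℕ → X} {C : ℝ}
    (hy : ∀ F : Finset ℕ, ‖∑ k ∈ F, y k‖ ≤ C) {m : ℕ → ℕ} (hm : Function.Injective m)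
    (F : Finset ℕ) : ‖∑ k ∈ F, y (m k)‖ ≤ C := by
  rw [← Finset.sum_image fun i _ j _ h => hm h]
  exact hy _

section BoundedSubsums

variable {X : Type*} [NormedAddCommGroup X] [NormedSpace ℝ X] {y : ℕ → X} {C : ℝ}

theorem sum_abs_apply_le (hy : ∀ F : Finset ℕ, ‖∑ k ∈ F, y k‖ ≤ C) (g : StrongDual ℝ X)
    (F : Finset ℕ) : ∑ k ∈ F, |g (y k)| ≤ 2 * ‖g‖ * C := by
  have hG (G : Finset ℕ) : |∑ k ∈ G, g (y k)| ≤ ‖g‖ * C := by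
    rw [← map_sum, ← Real.norm_eq_abs]
    exact (g.le_opNorm _).trans (by gcongr; exact hy G)
  have hpos : ∑ k ∈ F with 0 ≤ g (y k), |g (y k)| = ∑ k ∈ F with 0 ≤ g (y k), g (y k) :=
    Finset.sum_congr rfl fun k hk => abs_of_nonneg (Finset.mem_filter.1 hk).2
  have hneg : ∑ k ∈ F with ¬ 0 ≤ g (y k), |g (y k)| = -∑ k ∈ F with ¬ 0 ≤ g (y k), g (y k) := by
    rw [← Finset.sum_neg_distrib]
    exact Finset.sum_congr rfl fun k hk => abs_of_neg (not_le.1 (Finset.mem_filter.1 hk).2)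
  rw [← Finset.sum_filter_add_sum_filter_not F (fun k => 0 ≤ g (y k)), hpos, hneg]
  linarith [le_abs_self (∑ k ∈ F with 0 ≤ g (y k), g (y k)), hG (F.filter fun k => 0 ≤ g (y k)),
    neg_le_abs (∑ k ∈ F with ¬ 0 ≤ g (y k), g (y k)), hG (F.filter fun k => ¬ 0 ≤ g (y k))]

theorem norm_sum_smul_le (hy : ∀ F : Finset ℕ, ‖∑ k ∈ F, y k‖ ≤ C) {b : ℕ → ℝ} {B : ℝ}
    (hB : 0 ≤ B) {F : Finset ℕ} (hb : ∀ k ∈ F, |b k| ≤ B) :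
    ‖∑ k ∈ F, b k • y k‖ ≤ 2 * B * C := by
  have hC : 0 ≤ C := (norm_nonneg _).trans (hy ∅)
  refine NormedSpace.norm_le_dual_bound ℝ _ (by positivity) fun g => ?_
  calc ‖g (∑ k ∈ F, b k • y k)‖ = |∑ k ∈ F, b k * g (y k)| := by
        simp only [map_sum, map_smul, smul_eq_mul, Real.norm_eq_abs]
    _ ≤ ∑ k ∈ F, |b k| * |g (y k)| := (Finset.abs_sum_le_sum_abs _ _).trans_eq (by simp [abs_mul])
    _ ≤ ∑ k ∈ F, B * |g (y k)| := Finset.sum_le_sum fun k hk => by gcongr; exact hb k hk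
    _ = B * ∑ k ∈ F, |g (y k)| := (Finset.mul_sum _ _ _).symm
    _ ≤ B * (2 * ‖g‖ * C) := by gcongr; exact sum_abs_apply_le hy g F
    _ = 2 * B * C * ‖g‖ := by ring

end BoundedSubsums

open Finset in
theorem Summable.exists_sum_abs_le {g : ℕ → ℝ} (hg : Summable g) {e : ℝ} (he : 0 < e) :
    ∃ N, ∀ F : Finset ℕ, (∀ k ∈ F, N ≤ k) → ∑ k ∈ F, |g k| ≤ e := by
  obtain ⟨s, hs⟩ := summable_iff_vanishing_norm.1 hg.abs e he
  refine ⟨s.sup id + 1, fun F hF => (le_abs_self _).trans (hs F ?_).le⟩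
  refine disjoint_left.2 fun k hkF hks => ?_
  have := le_sup (f := id) hks
  have := hF k hkF
  simp only [id] at *
  omega

theorem exists_strictMono_forall_eventually {P : ℕ → ℕ → Prop}
    (h : ∀ m, ∀ᶠ j in atTop, P m j) (N : ℕ) :
    ∃ u : ℕ → ℕ, u 0 = N ∧ StrictMono u ∧ ∀ t, P (u t) (u (t + 1)) := by
  choose next hnext using fun m => ((h m).and (eventually_gt_atTop m)).exists
  have hu (t : ℕ) : next^[t + 1] N = next (next^[t] N) := Function.iterate_succ_apply' next t N
  refine ⟨fun t => next^[t] N, rfl, strictMono_nat_of_lt_succ fun t => ?_, fun t => ?_⟩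
  · simpa only [hu] using (hnext _).2
  · simpa only [hu] using (hnext _).1

/- Before the diagonal, row `n t` is close to the limit `c` on the earlier columns, and `c` is
small there since they lie beyond `N`; after it, the columns lie in the small tail of row `n t`. -/
open Finset in
theorem exists_strictMono_sum_abs_offDiag_le_of_tendsto {A : ℕ → ℕ → ℝ} {c : ℕ → ℝ}
    (hA : ∀ j, Summable (A j)) (hc : Summable c)
    (hAc : ∀ k, Tendsto (fun j => A j k) atTop (𝓝 (c k))) {δ : ℝ} (hδ : 0 < δ) :
    ∃ n : ℕ → ℕ, StrictMono n ∧ ∀ t (F : Finset ℕ), t ∉ F → ∑ s ∈ F, |A (n t) (n s)| ≤ δ := by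
  obtain ⟨N, hN⟩ := hc.exists_sum_abs_le (by positivity : 0 < δ / 3)
  choose M hM using fun j => (hA j).exists_sum_abs_le (by positivity : 0 < δ / 3)
  have hev (m : ℕ) : ∀ᶠ j in atTop, M m ≤ j ∧ ∑ k ∈ range (m + 1), |A j k - c k| ≤ δ / 3 := by
    have : Tendsto (fun j => ∑ k ∈ range (m + 1), |A j k - c k|) atTop (𝓝 0) := by
      simpa using tendsto_finsetSum _ fun k _ => ((hAc k).sub_const (c k)).abs
    exact (eventually_ge_atTop _).and (this.eventually (eventually_le_nhds (by positivity)))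
  obtain ⟨u, hu0, hu_mono, hu⟩ := exists_strictMono_forall_eventually hev N
  set n : ℕ → ℕ := fun t => u (t + 1)
  have hn_mono : StrictMono n := hu_mono.comp fun _ _ h => Nat.succ_lt_succ h
  refine ⟨n, hn_mono, fun t F htF => ?_⟩
  have hsum_image (G : Finset ℕ) : ∑ s ∈ G, |A (n t) (n s)| = ∑ k ∈ G.image n, |A (n t) k| :=
    (sum_image (f := fun k => |A (n t) k|) fun _ _ _ _ h => hn_mono.injective h).symm
  have hbefore : ∑ s ∈ F with s < t, |A (n t) (n s)| ≤ δ / 3 + δ / 3 := by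
    have hsub : (F.filter (· < t)).image n ⊆ range (u t + 1) := by
      simp only [subset_iff, mem_image, mem_filter, mem_range]
      rintro _ ⟨s, ⟨-, hst⟩, rfl⟩
      exact Nat.lt_succ_of_le (hu_mono.monotone hst)
    have hge : ∀ k ∈ (F.filter (· < t)).image n, N ≤ k := by
      simp only [mem_image]
      rintro _ ⟨s, -, rfl⟩
      exact hu0 ▸ (hu_mono (Nat.succ_pos s)).le
    rw [hsum_image]
    calc ∑ k ∈ (F.filter (· < t)).image n, |A (n t) k|
        ≤ ∑ k ∈ (F.filter (· < t)).image n, (|A (n t) k - c k| + |c k|) :=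
          sum_le_sum fun k _ => by linarith [abs_sub_abs_le_abs_sub (A (n t) k) (c k)]
      _ ≤ ∑ k ∈ range (u t + 1), |A (n t) k - c k| + δ / 3 := by
          rw [sum_add_distrib]
          exact add_le_add (sum_le_sum_of_subset_of_nonneg hsub fun _ _ _ => abs_nonneg _)
            (hN _ hge)
      _ ≤ δ / 3 + δ / 3 := add_le_add_left (hu t).2 _
  have hafter : ∑ s ∈ F with ¬ s < t, |A (n t) (n s)| ≤ δ / 3 := by
    rw [hsum_image]
    refine hM (n t) _ ?_
    simp only [mem_image, mem_filter]
    rintro _ ⟨s, ⟨hsF, hst⟩, rfl⟩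
    have hts : t + 1 ≤ s := by
      have : s ≠ t := fun h => htF (h ▸ hsF)
      omega
    exact (hu (t + 1)).1.trans (hn_mono.monotone hts)
  rw [← sum_filter_add_sum_filter_not F (· < t)]
  linarith

theorem exists_strictMono_sum_abs_offDiag_le {A : ℕ → ℕ → ℝ} {B : ℝ}
    (hA : ∀ j (F : Finset ℕ), ∑ k ∈ F, |A j k| ≤ B) {δ : ℝ} (hδ : 0 < δ) :
    ∃ n : ℕ → ℕ, StrictMono n ∧ ∀ t (F : Finset ℕ), t ∉ F → ∑ s ∈ F, |A (n t) (n s)| ≤ δ := by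
  have hbdd (j : ℕ) : A j ∈ Set.univ.pi fun _ => Set.Icc (-B) B :=
    Set.mem_univ_pi.2 fun k => abs_le.1 (by simpa using hA j {k})
  obtain ⟨c, -, φ, hφ, hlim⟩ := (isCompact_univ_pi fun _ => isCompact_Icc).tendsto_subseq hbdd
  have hAc (k : ℕ) : Tendsto (fun j => A (φ j) k) atTop (𝓝 (c k)) := tendsto_pi_nhds.1 hlim k
  have hA_summable (j : ℕ) : Summable (A j) :=
    summable_abs_iff.1 (summable_of_sum_le (fun _ => abs_nonneg _) (hA j))
  have hc_summable : Summable c := summable_abs_iff.1 <|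
    summable_of_sum_le (fun _ => abs_nonneg _) fun F => le_of_tendsto
      (tendsto_finsetSum F fun k _ => (hAc k).abs) (Eventually.of_forall fun j => hA (φ j) F)
  obtain ⟨n, hn, hoff⟩ := exists_strictMono_sum_abs_offDiag_le_of_tendsto
    (A := fun j k => A (φ j) (φ k)) (fun j => (hA_summable (φ j)).comp_injective hφ.injective)
    (hc_summable.comp_injective hφ.injective) (fun k => hAc (φ k)) hδ
  exact ⟨φ ∘ n, hφ.comp hn, hoff⟩

namespace ZeroAtInftyContinuousMap

variable {α β : Type*} [TopologicalSpace α] [SeminormedAddCommGroup β]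

theorem norm_apply_le_norm (a : C₀(α, β)) (x : α) : ‖a x‖ ≤ ‖a‖ :=
  norm_toBCF_eq_norm (f := a) ▸ a.toBCF.norm_coe_le_norm x

theorem norm_le {a : C₀(α, β)} {C : ℝ} (hC : 0 ≤ C) : ‖a‖ ≤ C ↔ ∀ x, ‖a x‖ ≤ C :=
  norm_toBCF_eq_norm (f := a) ▸ BoundedContinuousFunction.norm_le hC

theorem sum_apply {ι : Type*} (F : Finset ι) (a : ι → C₀(α, β)) (x : α) :
    (∑ i ∈ F, a i) x = ∑ i ∈ F, a i x :=
  map_sum (⟨⟨fun g : C₀(α, β) => g x, rfl⟩, fun _ _ => rfl⟩ : C₀(α, β) →+ β) a F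

end ZeroAtInftyContinuousMap

theorem tendsto_atTop_c0 (a : C₀(ℕ, ℝ)) : Tendsto a atTop (𝓝 0) :=
  cocompact_eq_atTop (α := ℕ) ▸ a.zero_at_infty'

noncomputable def c0Single (t : ℕ) : C₀(ℕ, ℝ) where
  toFun := (Pi.single t 1 : ℕ → ℝ)
  continuous_toFun := continuous_of_discreteTopology
  zero_at_infty' := cocompact_eq_atTop (α := ℕ) ▸ tendsto_const_nhds.congr'
    ((eventually_gt_atTop t).mono fun _ hs => by simp [hs.ne'])

theorem c0Single_apply (t s : ℕ) : c0Single t s = (Pi.single t 1 : ℕ → ℝ) s := rfl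

theorem one_le_norm_c0Single (t : ℕ) : 1 ≤ ‖c0Single t‖ := by
  simpa [c0Single_apply] using (c0Single t).norm_apply_le_norm t

theorem norm_sum_c0Single_le (F : Finset ℕ) : ‖∑ t ∈ F, c0Single t‖ ≤ 1 := by
  refine (ZeroAtInftyContinuousMap.norm_le zero_le_one).2 fun s => ?_
  rw [ZeroAtInftyContinuousMap.sum_apply]
  simp only [c0Single_apply, Pi.single_apply, Finset.sum_ite_eq]
  split_ifs <;> simp

theorem not_stronglyNSSAdd_of_c0_equiv {X : Type*} [NormedAddCommGroup X] [NormedSpace ℝ X]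
    {Y : Submodule ℝ X} (e : C₀(ℕ, ℝ) ≃L[ℝ] Y) : ¬ StronglyNSSAdd X := by
  refine not_stronglyNSSAdd_of_norm_sum_le (v := fun t => (e (c0Single t) : X))
    (C := ‖(e : C₀(ℕ, ℝ) →L[ℝ] Y)‖) ?_ fun F => ?_
  · intro h
    have hY : Tendsto (fun t => e (c0Single t)) atTop (𝓝 0) :=
      Topology.IsInducing.subtypeVal.tendsto_nhds_iff.2 h
    have hsingle : Tendsto c0Single atTop (𝓝 0) := by
      simpa [Function.comp_def] using (e.symm.continuous.tendsto 0).comp hY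
    obtain ⟨t, ht⟩ :=
      (hsingle.norm.eventually (eventually_lt_nhds (by simp : ‖(0 : C₀(ℕ, ℝ))‖ < 1))).exists
    exact (one_le_norm_c0Single t).not_gt ht
  · calc ‖∑ t ∈ F, (e (c0Single t) : X)‖ = ‖e (∑ t ∈ F, c0Single t)‖ := by
          rw [map_sum, ← Submodule.norm_coe, Submodule.coe_sum]
      _ ≤ ‖(e : C₀(ℕ, ℝ) →L[ℝ] Y)‖ * ‖∑ t ∈ F, c0Single t‖ :=
          (e : C₀(ℕ, ℝ) →L[ℝ] Y).le_opNorm _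
      _ ≤ ‖(e : C₀(ℕ, ℝ) →L[ℝ] Y)‖ :=
          mul_le_of_le_one_right (ContinuousLinearMap.opNorm_nonneg _) (norm_sum_c0Single_le F)

theorem le_norm_sum_smul {X : Type*} [NormedAddCommGroup X] [NormedSpace ℝ X] {z : ℕ → X}
    {h : StrongDual ℝ X} {t : ℕ} {ε δ : ℝ} (hh : ‖h‖ ≤ 1) (hd : ε ≤ h (z t))
    (hoff : ∀ F : Finset ℕ, t ∉ F → ∑ s ∈ F, |h (z s)| ≤ δ) {b : ℕ → ℝ} {B : ℝ}
    (hb : ∀ s, |b s| ≤ B) {F : Finset ℕ} (ht : t ∈ F) :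
    ε * |b t| - δ * B ≤ ‖∑ s ∈ F, b s • z s‖ := by
  have hB : 0 ≤ B := (abs_nonneg _).trans (hb 0)
  have hsplit : h (∑ s ∈ F, b s • z s) = b t * h (z t) + ∑ s ∈ F.erase t, b s * h (z s) := by
    simp only [map_sum, map_smul, smul_eq_mul]
    exact (Finset.add_sum_erase F _ ht).symm
  have hdiag : ε * |b t| ≤ |b t * h (z t)| := by
    rw [abs_mul, mul_comm]
    exact mul_le_mul_of_nonneg_left (hd.trans (le_abs_self _)) (abs_nonneg _)
  have hrest : |∑ s ∈ F.erase t, b s * h (z s)| ≤ δ * B :=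
    calc |∑ s ∈ F.erase t, b s * h (z s)| ≤ ∑ s ∈ F.erase t, B * |h (z s)| :=
          (Finset.abs_sum_le_sum_abs _ _).trans <| Finset.sum_le_sum fun s _ => by
            rw [abs_mul]; exact mul_le_mul_of_nonneg_right (hb s) (abs_nonneg _)
      _ = B * ∑ s ∈ F.erase t, |h (z s)| := (Finset.mul_sum _ _ _).symm
      _ ≤ B * δ := by gcongr; exact hoff _ (Finset.notMem_erase t F)
      _ = δ * B := mul_comm _ _
  calc ε * |b t| - δ * B ≤ |h (∑ s ∈ F, b s • z s)| := by
        rw [hsplit]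
        linarith [abs_sub_abs_le_abs_add (b t * h (z t)) (∑ s ∈ F.erase t, b s * h (z s))]
    _ ≤ ‖h‖ * ‖∑ s ∈ F, b s • z s‖ := h.le_opNorm _
    _ ≤ ‖∑ s ∈ F, b s • z s‖ := mul_le_of_le_one_left (norm_nonneg _) hh

theorem ContinuousLinearMap.exists_isClosed_equiv_of_antilipschitz {E F : Type*}
    [NormedAddCommGroup E] [NormedSpace ℝ E] [CompleteSpace E] [NormedAddCommGroup F]
    [NormedSpace ℝ F] [CompleteSpace F] (T : E →L[ℝ] F) {K : NNReal}
    (hT : AntilipschitzWith K T) :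
    ∃ Y : Submodule ℝ F, IsClosed (Y : Set F) ∧ Nonempty (E ≃L[ℝ] Y) :=
  have hclosed := hT.isClosed_range T.uniformContinuous
  ⟨LinearMap.range (T : E →ₗ[ℝ] F), by rwa [LinearMap.coe_range],
    ⟨T.equivRange hT.injective hclosed⟩⟩

section C0Series

variable {X : Type*} [NormedAddCommGroup X] [NormedSpace ℝ X] [CompleteSpace X] {z : ℕ → X}
  {C : ℝ}

theorem summable_c0_smul (hz : ∀ F : Finset ℕ, ‖∑ k ∈ F, z k‖ ≤ C) (a : C₀(ℕ, ℝ)) :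
    Summable fun k => a k • z k := by
  have hC : 0 ≤ C := (norm_nonneg _).trans (hz ∅)
  refine summable_iff_vanishing_norm.2 fun e he => ?_
  set η := e / (2 * (C + 1))
  obtain ⟨N, hN⟩ := eventually_atTop.1
    (NormedAddGroup.tendsto_nhds_zero.1 (tendsto_atTop_c0 a) η (by positivity))
  refine ⟨Finset.range N, fun F hF => ?_⟩
  have hb (k : ℕ) (hk : k ∈ F) : |a k| ≤ η :=
    (hN k (not_lt.1 fun h => Finset.disjoint_left.1 hF hk (Finset.mem_range.2 h))).le
  calc ‖∑ k ∈ F, a k • z k‖ ≤ 2 * η * C := norm_sum_smul_le hz (by positivity) hb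
    _ < 2 * η * (C + 1) := by gcongr; linarith
    _ = e := by simp only [η]; field_simp

noncomputable def c0SeriesCLM (hz : ∀ F : Finset ℕ, ‖∑ k ∈ F, z k‖ ≤ C) : C₀(ℕ, ℝ) →L[ℝ] X :=
  LinearMap.mkContinuous
    { toFun := fun a => ∑' k, a k • z k
      map_add' := fun a b => by
        simp only [ZeroAtInftyContinuousMap.coe_add, Pi.add_apply, add_smul]
        exact (summable_c0_smul hz a).tsum_add (summable_c0_smul hz b)
      map_smul' := fun r a => by
        simp only [ZeroAtInftyContinuousMap.coe_smul, Pi.smul_apply, smul_eq_mul, mul_smul,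
          RingHom.id_apply]
        exact (summable_c0_smul hz a).tsum_const_smul r }
    (2 * C) fun a => le_of_tendsto (summable_c0_smul hz a).hasSum.norm <| Eventually.of_forall
      fun F => (norm_sum_smul_le hz (norm_nonneg a) fun k _ => a.norm_apply_le_norm k).trans_eq
        (by ring)

theorem c0SeriesCLM_apply (hz : ∀ F : Finset ℕ, ‖∑ k ∈ F, z k‖ ≤ C) (a : C₀(ℕ, ℝ)) :
    c0SeriesCLM hz a = ∑' k, a k • z k := rfl

theorem norm_le_mul_norm_c0SeriesCLM (hz : ∀ F : Finset ℕ, ‖∑ k ∈ F, z k‖ ≤ C)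
    {h : ℕ → StrongDual ℝ X} {ε : ℝ} (hε : 0 < ε) (hh : ∀ t, ‖h t‖ ≤ 1)
    (hd : ∀ t, ε ≤ h t (z t)) (hoff : ∀ t (F : Finset ℕ), t ∉ F → ∑ s ∈ F, |h t (z s)| ≤ ε / 2)
    (a : C₀(ℕ, ℝ)) : ‖a‖ ≤ 2 / ε * ‖c0SeriesCLM hz a‖ := by
  have hlow (t : ℕ) : ε * |a t| - ε / 2 * ‖a‖ ≤ ‖c0SeriesCLM hz a‖ := by
    rw [c0SeriesCLM_apply]
    exact ge_of_tendsto (summable_c0_smul hz a).hasSum.norm <| (eventually_ge_atTop {t}).mono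
      fun F hF => le_norm_sum_smul (hh t) (hd t) (hoff t) a.norm_apply_le_norm
        (Finset.singleton_subset_iff.1 hF)
  have hnorm : ‖a‖ * ε ≤ ‖c0SeriesCLM hz a‖ + ε / 2 * ‖a‖ := by
    rw [← le_div_iff₀ hε]
    refine (ZeroAtInftyContinuousMap.norm_le (by positivity)).2 fun t => ?_
    rw [le_div_iff₀ hε, Real.norm_eq_abs]
    linarith [hlow t]
  rw [div_mul_eq_mul_div, le_div_iff₀ hε]
  linarith

end C0Series

section Selection

variable {X : Type*} [NormedAddCommGroup X] [NormedSpace ℝ X] [CompleteSpace X]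

theorem exists_c0_subspace_of_almostBiorthogonal {z : ℕ → X} {C : ℝ}
    (hz : ∀ F : Finset ℕ, ‖∑ k ∈ F, z k‖ ≤ C) {h : ℕ → StrongDual ℝ X} {ε : ℝ} (hε : 0 < ε)
    (hh : ∀ t, ‖h t‖ ≤ 1) (hd : ∀ t, ε ≤ h t (z t))
    (hoff : ∀ t (F : Finset ℕ), t ∉ F → ∑ s ∈ F, |h t (z s)| ≤ ε / 2) :
    ∃ Y : Submodule ℝ X, IsClosed (Y : Set X) ∧ Nonempty (C₀(ℕ, ℝ) ≃L[ℝ] Y) :=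
  (c0SeriesCLM hz).exists_isClosed_equiv_of_antilipschitz <|
    ContinuousLinearMap.antilipschitz_of_bound (K := ⟨2 / ε, by positivity⟩) _
      (norm_le_mul_norm_c0SeriesCLM hz hε hh hd hoff)

theorem exists_c0_subspace_of_norm_sum_le {y : ℕ → X} (hy0 : ¬ Tendsto y atTop (𝓝 0)) {C : ℝ}
    (hy : ∀ F : Finset ℕ, ‖∑ k ∈ F, y k‖ ≤ C) :
    ∃ Y : Submodule ℝ X, IsClosed (Y : Set X) ∧ Nonempty (C₀(ℕ, ℝ) ≃L[ℝ] Y) := by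
  obtain ⟨ε, hε, hfreq⟩ : ∃ ε > 0, ∃ᶠ k in atTop, ε ≤ ‖y k‖ := by
    simpa [NormedAddGroup.tendsto_nhds_zero, frequently_atTop] using hy0
  obtain ⟨m, hm, hεm⟩ := extraction_of_frequently_atTop hfreq
  have hym := norm_sum_comp_le_of_injective hy hm.injective
  choose f hf_norm hf_apply using fun k => exists_dual_vector ℝ (y (m k)) (hε.trans_le (hεm k)).ne'
  obtain ⟨n, hn, hoff⟩ := exists_strictMono_sum_abs_offDiag_le (A := fun j k => f j (y (m k)))
    (fun j F => (sum_abs_apply_le hym (f j) F).trans_eq (by rw [hf_norm, mul_one]))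
    (half_pos hε)
  refine exists_c0_subspace_of_almostBiorthogonal (norm_sum_comp_le_of_injective hym hn.injective)
    hε (fun t => (hf_norm (n t)).le) (fun t => ?_) hoff
  simpa [hf_apply] using hεm (n t)

end Selection

theorem stmt_7_general (X : Type*) [NormedAddCommGroup X] [NormedSpace ℝ X] [CompleteSpace X] :
    ¬ StronglyNSSAdd X ↔
      ∃ Y : Submodule ℝ X, IsClosed (Y : Set X) ∧ Nonempty (C₀(ℕ, ℝ) ≃L[ℝ] Y) := by
  refine ⟨fun hX => ?_, fun ⟨_, _, ⟨e⟩⟩ => not_stronglyNSSAdd_of_c0_equiv e⟩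
  obtain ⟨v, hv0, hv⟩ := exists_norm_sum_le_one_of_not_stronglyNSSAdd hX
  exact exists_c0_subspace_of_norm_sum_le hv0 hv

/-- A separable Banach space `X` is not strongly NSS iff it has a closed linear subspace
topologically isomorphic to `c₀`. -/
theorem stmt_7 (X : Type*) [NormedAddCommGroup X] [NormedSpace ℝ X] [CompleteSpace X]
    [TopologicalSpace.SeparableSpace X] :
    ¬ StronglyNSSAdd X ↔
      ∃ Y : Submodule ℝ X, IsClosed (Y : Set X) ∧ Nonempty (C₀(ℕ, ℝ) ≃L[ℝ] Y) :=
  stmt_7_general X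
end

section
/- Let G, H be Polish groups and φ : G → H a continuous homomorphism such that φ(G) is closed in H and ker(φ) is non-archimedean. Then for every sequence x ∈ G^ω with lim_p x(p) = 1_G, the partial products (x(0)···x(p))_p are ι-Cauchy in G if and only if the partial products (φ(x(0))···φ(x(p)))_p are ι-Cauchy in H. -/
open Filter Topology

/-- The partial product `x(0) ⋯ x(n)`. -/
def partialProd {G : Type*} [Monoid G] (x : ℕ → G) (n : ℕ) : G :=
  ((List.range (n + 1)).map x).prod

/-- A sequence is ι-Cauchy if it is Cauchy for some compatible left-invariant metric. -/
def IotaCauchy {G : Type*} [Group G] [t : TopologicalSpace G] (u : ℕ → G) : Prop :=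
  ∃ m : MetricSpace G, m.toUniformSpace.toTopologicalSpace = t ∧
    (∀ g h k : G, @dist G m.toDist (g * h) (g * k) = @dist G m.toDist h k) ∧
    @CauchySeq G ℕ m.toUniformSpace _ u

/-- A topological group is non-archimedean if it has a neighborhood basis of the identity
consisting of open subgroups. -/
def NonArchimedeanGroup (G : Type*) [Group G] [TopologicalSpace G] : Prop :=
  ∀ U ∈ 𝓝 (1 : G), ∃ K : Subgroup G, IsOpen (K : Set G) ∧ (K : Set G) ⊆ U

open Set Pointwise

/-!
Any compatible left-invariant metric induces the left uniformity `(g, h) ↦ g⁻¹ * h`, and such a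
metric exists by Kakutani's construction, so being ι-Cauchy means being Cauchy for the left
uniformity. Continuous homomorphisms preserve this, which is the forward direction.

For the converse, the open mapping theorem for Polish groups (Pettis' theorem applied to the
analytic, hence Baire measurable, image of a neighbourhood) shows that `φ g` close to `1` forces
`g ∈ ker φ * A` for a prescribed small `A`. Take an open subgroup `K` of the kernel inside a small
neighbourhood. Following the partial products from a late index `N`, the tail `s_N⁻¹ * s_n` stays
in `K * A`: the next factor is small and the new tail lies in `ker φ * A`, so its kernel part
differs from the old `K`-part by an element of `ker φ ∩ A * A * A⁻¹ ⊆ K`.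
-/

theorem min_one_add_le {a b : ℝ} (ha : 0 ≤ a) (hb : 0 ≤ b) :
    min 1 (a + b) ≤ min 1 a + min 1 b := by
  simp only [min_def]; split_ifs <;> linarith

theorem bddAbove_range_min_one {α : Type*} (f : α → ℝ) : BddAbove (range fun k => min 1 (f k)) :=
  ⟨1, by rintro _ ⟨k, rfl⟩; exact min_le_left _ _⟩

section KakutaniSeminorm

variable {G : Type*} [Group G] [PseudoMetricSpace G]

-- The supremum over all left translates makes it subadditive; truncating at `1` keeps it finite.
noncomputable def kakutaniSeminorm : GroupSeminorm G where
  toFun x := ⨆ k : G, min 1 (dist k (k * x))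
  map_one' := by simp
  mul_le' x y := ciSup_le fun k => by
    calc min 1 (dist k (k * (x * y)))
        ≤ min 1 (dist k (k * x) + dist (k * x) (k * x * y)) := by
          rw [← mul_assoc]; exact min_le_min le_rfl (dist_triangle _ _ _)
      _ ≤ min 1 (dist k (k * x)) + min 1 (dist (k * x) (k * x * y)) :=
          min_one_add_le dist_nonneg dist_nonneg
      _ ≤ _ := add_le_add (le_ciSup (bddAbove_range_min_one fun k => dist k (k * x)) k)
          (le_ciSup (bddAbove_range_min_one fun k => dist k (k * y)) (k * x))
  inv' x := by
    rw [← (Equiv.mulRight x).iSup_comp]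
    simp [dist_comm]

theorem min_one_dist_le_kakutaniSeminorm (k x : G) :
    min 1 (dist k (k * x)) ≤ kakutaniSeminorm x :=
  le_ciSup (bddAbove_range_min_one fun k => dist k (k * x)) k

end KakutaniSeminorm

section LeftUniformity

variable {G : Type*} [Group G] [TopologicalSpace G] [IsTopologicalGroup G]

theorem hasBasis_nhds_one_kakutaniSeminorm (m : PseudoMetricSpace G)
    (hm : m.toUniformSpace = IsTopologicalGroup.leftUniformSpace G) :
    (𝓝 (1 : G)).HasBasis (fun ε : ℝ => 0 < ε) fun ε => {x | @kakutaniSeminorm G _ m x < ε} := by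
  have hU := @Metric.uniformity_basis_dist G m
  rw [hm, uniformity_eq_comap_nhds_one_left] at hU
  let _ : Dist G := m.toDist
  refine ⟨fun V => ⟨fun hV => ?_, fun ⟨ε, hε, hsub⟩ => ?_⟩⟩
  · obtain ⟨ε, hε, hsub⟩ := hU.mem_iff.1 (preimage_mem_comap hV)
    refine ⟨min ε 1, lt_min hε one_pos, fun x hx => ?_⟩
    have h1 := (@min_one_dist_le_kakutaniSeminorm G _ m 1 x).trans_lt hx
    rw [one_mul] at h1
    obtain ⟨h2, h3⟩ := lt_min_iff.1 h1
    rw [min_eq_right ((min_lt_iff.1 h3).resolve_left (lt_irrefl 1)).le] at h2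
    simpa using @hsub (1, x) h2
  · obtain ⟨W, hW, hWsub⟩ := hU.mem_iff.2 ⟨ε / 2, half_pos hε, subset_rfl⟩
    refine mem_of_superset hW fun x hx => hsub ?_
    have hx' : ∀ k : G, dist k (k * x) < ε / 2 := fun k =>
      @hWsub (k, k * x) (by simpa using hx)
    exact (ciSup_le fun k => (min_le_right _ _).trans (hx' k).le).trans_lt (half_lt_self hε)

theorem GroupSeminorm.exists_leftInvariant_metric [T1Space G] (N : GroupSeminorm G)
    (hN : (𝓝 (1 : G)).HasBasis (fun ε : ℝ => 0 < ε) fun ε => {x | N x < ε}) :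
    ∃ m : MetricSpace G, m.toUniformSpace.toTopologicalSpace = ‹TopologicalSpace G› ∧
      ∀ g h k : G, @dist G m.toDist (g * h) (g * k) = @dist G m.toDist h k := by
  have hnhds : ∀ g : G, (𝓝 g).HasBasis (fun ε : ℝ => 0 < ε) fun ε => {h | N (g⁻¹ * h) < ε} :=
    fun g => nhds_translation_inv_mul g ▸ hN.comap (g⁻¹ * ·)
  refine ⟨MetricSpace.ofDistTopology (fun g h => N (g⁻¹ * h)) (by simp) (fun g h => ?_)
    (fun g h k => ?_) (fun s => ?_) (fun g h hgh => ?_), rfl, fun g h k => ?_⟩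
  · rw [← map_inv_eq_map N, mul_inv_rev, inv_inv]
  · simpa [mul_assoc] using map_mul_le_add N (g⁻¹ * h) (h⁻¹ * k)
  · simp only [isOpen_iff_mem_nhds, (hnhds _).mem_iff, subset_def, mem_ofPred_eq]
  · by_contra hne
    obtain ⟨ε, hε, hsub⟩ := hN.mem_iff.1 (isOpen_compl_singleton.mem_nhds
      (show (1 : G) ≠ g⁻¹ * h by simpa [eq_inv_mul_iff_mul_eq] using hne))
    exact hsub (show N (g⁻¹ * h) < ε by rwa [hgh]) rfl
  · show N ((g * h)⁻¹ * (g * k)) = N (h⁻¹ * k)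
    rw [mul_inv_rev, mul_assoc, inv_mul_cancel_left]

theorem PseudoMetricSpace.toUniformSpace_eq_leftUniformSpace (m : PseudoMetricSpace G)
    (hm : m.toUniformSpace.toTopologicalSpace = ‹TopologicalSpace G›)
    (hinv : ∀ g h k : G, @dist G m.toDist (g * h) (g * k) = @dist G m.toDist h k) :
    m.toUniformSpace = IsTopologicalGroup.leftUniformSpace G := by
  subst hm
  let _ := m
  refine UniformSpace.ext ?_
  rw [uniformity_eq_comap_nhds_one_left, ← nhds_comap_dist (1 : G), comap_comap,
    Metric.uniformity_eq_comap_nhds_zero]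
  congr 1
  funext p
  show dist p.1 p.2 = dist (p.1⁻¹ * p.2) 1
  rw [dist_comm _ (1 : G), ← hinv p.1 1, mul_one, mul_inv_cancel_left]

theorem IsTopologicalGroup.exists_leftInvariant_metric [FirstCountableTopology G] [T1Space G] :
    ∃ m : MetricSpace G, m.toUniformSpace.toTopologicalSpace = ‹TopologicalSpace G› ∧
      ∀ g h k : G, @dist G m.toDist (g * h) (g * k) = @dist G m.toDist h k := by
  let _ := IsTopologicalGroup.leftUniformSpace G
  have : (uniformity G).IsCountablyGenerated := by
    rw [uniformity_eq_comap_nhds_one_left]; infer_instance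
  obtain ⟨m, hm⟩ := UniformSpace.metrizable_uniformity G
  exact (@kakutaniSeminorm G _ m).exists_leftInvariant_metric
    (hasBasis_nhds_one_kakutaniSeminorm m hm)

def LeftCauchySeq (u : ℕ → G) : Prop :=
  @CauchySeq G ℕ (IsTopologicalGroup.leftUniformSpace G) _ u

theorem hasBasis_leftUniformity :
    (@uniformity G (IsTopologicalGroup.leftUniformSpace G)).HasBasis (· ∈ 𝓝 (1 : G))
      fun V => (fun p : G × G => p.1⁻¹ * p.2) ⁻¹' V :=
  (𝓝 (1 : G)).basis_sets.comap _

theorem leftCauchySeq_iff {u : ℕ → G} :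
    LeftCauchySeq u ↔ ∀ V ∈ 𝓝 (1 : G), ∃ N, ∀ m ≥ N, ∀ n ≥ N, (u m)⁻¹ * u n ∈ V := by
  let _ := IsTopologicalGroup.leftUniformSpace G
  exact hasBasis_leftUniformity.cauchySeq_iff

theorem leftCauchySeq_iff' {u : ℕ → G} :
    LeftCauchySeq u ↔ ∀ V ∈ 𝓝 (1 : G), ∃ N, ∀ n ≥ N, (u N)⁻¹ * u n ∈ V := by
  let _ := IsTopologicalGroup.leftUniformSpace G
  rw [LeftCauchySeq, hasBasis_leftUniformity.cauchySeq_iff']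
  refine ⟨fun h V hV => ?_, fun h V hV => ?_⟩ <;>
  · obtain ⟨N, hN⟩ := h _ (inv_mem_nhds_one G hV)
    exact ⟨N, fun n hn => by simpa using hN n hn⟩

theorem LeftCauchySeq.map {H : Type*} [Group H] [TopologicalSpace H] [IsTopologicalGroup H]
    {u : ℕ → G} (hu : LeftCauchySeq u) {φ : G →* H} (hφ : Continuous φ) :
    LeftCauchySeq fun n => φ (u n) := by
  rw [leftCauchySeq_iff] at hu ⊢
  intro V hV
  obtain ⟨N, hN⟩ := hu _ (hφ.continuousAt.preimage_mem_nhds (by rwa [map_one]))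
  exact ⟨N, fun m hm n hn => by simpa using hN m hm n hn⟩

theorem iotaCauchy_iff_leftCauchySeq [FirstCountableTopology G] [T1Space G] {u : ℕ → G} :
    IotaCauchy u ↔ LeftCauchySeq u := by
  constructor
  · rintro ⟨m, hm, hinv, hu⟩
    rwa [m.toPseudoMetricSpace.toUniformSpace_eq_leftUniformSpace hm hinv] at hu
  · intro hu
    obtain ⟨m, hm, hinv⟩ := IsTopologicalGroup.exists_leftInvariant_metric (G := G)
    refine ⟨m, hm, hinv, ?_⟩
    rwa [m.toPseudoMetricSpace.toUniformSpace_eq_leftUniformSpace hm hinv]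

end LeftUniformity

section BaireHull

variable {X : Type*} [TopologicalSpace X]

theorem IsClosed.baireMeasurableSet {s : Set X} (hs : IsClosed s) : BaireMeasurableSet s :=
  hs.isOpen_compl.baireMeasurableSet.of_compl

theorem isMeagre_diff_of_residualEq {s t : Set X} (h : s =ᵇ t) : IsMeagre (s \ t) :=
  h.mem_iff.mono fun _ hx hxd => hxd.2 (hx.1 hxd.1)

def baireHull (s : Set X) : Set X :=
  (⋃₀ {U | IsOpen U ∧ IsMeagre (U ∩ s)})ᶜ

theorem isClosed_baireHull (s : Set X) : IsClosed (baireHull s) :=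
  (isOpen_sUnion fun _ hU => hU.1).isClosed_compl

theorem baireHull_subset_compl {s U : Set X} (hU : IsOpen U) (h : IsMeagre (U ∩ s)) :
    baireHull s ⊆ Uᶜ :=
  fun _ hx hxU => hx ⟨U, ⟨hU, h⟩, hxU⟩

theorem baireHull_subset_closure (s : Set X) : baireHull s ⊆ closure s := by
  simpa using baireHull_subset_compl isClosed_closure.isOpen_compl
    (IsMeagre.empty.mono fun _ hy => hy.1 (subset_closure hy.2))

theorem isMeagre_diff_baireHull [SecondCountableTopology X] (s : Set X) :
    IsMeagre (s \ baireHull s) := by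
  obtain ⟨T, hTc, hT, hTU⟩ :=
    TopologicalSpace.isOpen_sUnion_countable {U | IsOpen U ∧ IsMeagre (U ∩ s)} fun _ hU => hU.1
  have hs : s \ baireHull s = ⋃ U ∈ T, U ∩ s := by
    rw [baireHull, sdiff_compl, ← hTU, sUnion_eq_biUnion, inter_iUnion₂]
    simp only [inter_comm]
  rw [hs]
  exact isMeagre_biUnion hTc fun U hU => (hT hU).2

theorem isMeagre_baireHull_diff {s B : Set X} (hB : BaireMeasurableSet B)
    (hsB : IsMeagre (s \ B)) : IsMeagre (baireHull s \ B) := by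
  obtain ⟨O, hO, hBO⟩ := hB.residualEq_isOpen
  have hhull : baireHull s ⊆ closure O := by
    refine compl_compl (closure O) ▸ baireHull_subset_compl isClosed_closure.isOpen_compl
      ((hsB.union (isMeagre_diff_of_residualEq hBO)).mono fun y ⟨hyO, hys⟩ => ?_)
    by_cases hyB : y ∈ B
    · exact Or.inr ⟨hyB, fun h => hyO (subset_closure h)⟩
    · exact Or.inl ⟨hys, hyB⟩
  refine ((isMeagre_diff_of_residualEq (closure_residualEq hO.isLocallyClosed)).union
    (isMeagre_diff_of_residualEq hBO.symm)).mono ?_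
  rintro x ⟨hx, hxB⟩
  by_cases hxO : x ∈ O
  · exact Or.inr ⟨hxO, hxB⟩
  · exact Or.inl ⟨hhull hx, hxO⟩

end BaireHull

theorem exists_forall_res_of_forall_exists_cons {P : List ℕ → Prop} (h0 : P [])
    (hstep : ∀ l, P l → ∃ k, P (k :: l)) : ∃ z : ℕ → ℕ, ∀ n, P (PiNat.res z n) := by
  choose! g hg using hstep
  let L : ℕ → List ℕ := fun n => Nat.rec [] (fun _ l => g l :: l) n
  have hL : ∀ n, PiNat.res (fun i => g (L i)) n = L n := by
    intro n
    induction n with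
    | zero => rfl
    | succ n ih => rw [PiNat.res_succ, ih]
  have hPL : ∀ n, P (L n) := by
    intro n
    induction n with
    | zero => exact h0
    | succ n ih => exact hg _ ih
  exact ⟨fun i => g (L i), fun n => hL n ▸ hPL n⟩

theorem eq_of_forall_mem_closure_image_cylinder {X : Type*} [TopologicalSpace X] [T2Space X]
    {f : (ℕ → ℕ) → X} (hf : Continuous f) {x : X} {z : ℕ → ℕ}
    (h : ∀ n, x ∈ closure (f '' PiNat.cylinder z n)) : x = f z := by
  have hx : ClusterPt x (map f (𝓝 z)) := clusterPt_iff_forall_mem_closure.2 fun S hS => by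
    obtain ⟨_, ⟨y, n, rfl⟩, hzy, hsub⟩ :=
      (PiNat.isTopologicalBasis_cylinders fun _ => ℕ).mem_nhds_iff.1 hS
    rw [← PiNat.mem_cylinder_iff_eq.1 hzy] at hsub
    exact closure_mono (image_subset_iff.2 hsub) (h n)
  exact eq_of_nhds_neBot (hx.mono (hf.tendsto z))

theorem MeasureTheory.AnalyticSet.baireMeasurableSet {X : Type*} [TopologicalSpace X]
    [SecondCountableTopology X] [T2Space X] {s : Set X} (hs : AnalyticSet s) :
    BaireMeasurableSet s := by
  rw [AnalyticSet] at hs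
  rcases hs with rfl | ⟨f, hf, rfl⟩
  · exact IsMeagre.empty.baireMeasurableSet
  -- `PiNat.res y n` lists `y 0, …, y (n - 1)` backwards, so a prefix grows by consing.
  set A : List ℕ → Set X := fun l => f '' {y | PiNat.res y l.length = l}
  have hA : ∀ l, A l ⊆ ⋃ k, A (k :: l) := by
    rintro l _ ⟨y, hy, rfl⟩
    exact mem_iUnion.2 ⟨y l.length, y, by simpa [PiNat.res_succ] using hy, rfl⟩
  set M := ⋃ l, baireHull (A l) \ ⋃ k, baireHull (A (k :: l))
  have hM : IsMeagre M := isMeagre_iUnion fun l =>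
    isMeagre_baireHull_diff
      (BaireMeasurableSet.iUnion fun k => (isClosed_baireHull _).baireMeasurableSet)
      ((isMeagre_iUnion fun k => isMeagre_diff_baireHull (A (k :: l))).mono fun x ⟨hx, hxk⟩ => by
        obtain ⟨k, hk⟩ := mem_iUnion.1 (hA l hx)
        exact mem_iUnion.2 ⟨k, hk, fun h => hxk (mem_iUnion.2 ⟨k, h⟩)⟩)
  have hrange : range f = A [] := by simp [A]
  -- A point of the hull outside `M` stays in the hulls along a whole branch `z`, so it is `f z`.
  have hsieve : baireHull (range f) \ range f ⊆ M := by
    rintro x ⟨hx, hxf⟩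
    by_contra hxM
    obtain ⟨z, hz⟩ := exists_forall_res_of_forall_exists_cons
        (P := fun l => x ∈ baireHull (A l)) (hrange ▸ hx) fun l hl => by
      by_contra h
      exact hxM (mem_iUnion.2 ⟨l, hl, by simpa using h⟩)
    refine hxf ⟨z, (eq_of_forall_mem_closure_image_cylinder hf fun n => ?_).symm⟩
    have := baireHull_subset_closure _ (hz n)
    dsimp only [A] at this
    rwa [PiNat.res_length, ← PiNat.cylinder_eq_res] at this
  rw [← inter_union_sdiff (range f) (baireHull (range f)), inter_comm, ← sdiff_sdiff_right_self]
  exact ((isClosed_baireHull _).baireMeasurableSet.diff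
    (hM.mono hsieve).baireMeasurableSet).union (isMeagre_diff_baireHull _).baireMeasurableSet

theorem IsMeagre.smul {B : Type*} [Group B] [TopologicalSpace B] [IsTopologicalGroup B]
    {M : Set B} (hM : IsMeagre M) (c : B) : IsMeagre (c • M) :=
  preimage_smul_inv c M ▸ hM.preimage_of_isOpenMap (continuous_const_smul c⁻¹) (isOpenMap_smul c⁻¹)

theorem BaireMeasurableSet.inv_mul_mem_nhds_one {B : Type*} [Group B] [TopologicalSpace B]
    [IsTopologicalGroup B] [BaireSpace B] {A : Set B} (hA : BaireMeasurableSet A)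
    (hA' : ¬IsMeagre A) : A⁻¹ * A ∈ 𝓝 (1 : B) := by
  obtain ⟨O, hO, hAO⟩ := hA.residualEq_isOpen
  obtain ⟨u, hu⟩ : O.Nonempty := by
    by_contra! h
    exact hA' ((isMeagre_diff_of_residualEq hAO).mono (by simp [h]))
  have hW : (u * ·) ⁻¹' O ∈ 𝓝 (1 : B) :=
    (hO.preimage (continuous_const_mul u)).mem_nhds (by simpa using hu)
  refine mem_of_superset hW fun g hg => ?_
  have hres : ∀ᶠ b in residual B, (b ∈ A ↔ b ∈ O) ∧ (b * g ∈ A ↔ b * g ∈ O) :=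
    hAO.mem_iff.and <| (tendsto_residual_of_isOpenMap (continuous_mul_const g)
      (isOpenMap_mul_right g)).eventually hAO.mem_iff
  obtain ⟨b, ⟨hbO, hbgO⟩, hbA, hbgA⟩ := (dense_of_mem_residual hres).inter_open_nonempty _
    (hO.inter (hO.preimage (continuous_mul_const g))) ⟨u, hu, hg⟩
  exact ⟨b⁻¹, inv_mem_inv.2 (hbA.2 hbO), b * g, hbgA.2 hbgO, by group⟩

theorem MonoidHom.image_mem_nhds_one_of_surjective {G B : Type*} [Group G] [TopologicalSpace G]
    [IsTopologicalGroup G] [PolishSpace G] [Group B] [TopologicalSpace B] [IsTopologicalGroup B]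
    [T2Space B] [SecondCountableTopology B] [BaireSpace B] (ψ : G →* B) (hψ : Continuous ψ)
    (hsurj : Function.Surjective ψ) {U : Set G} (hU : U ∈ 𝓝 1) : ψ '' U ∈ 𝓝 1 := by
  obtain ⟨V, hV, hVc, hVinv, hVU⟩ := exists_closed_nhds_one_inv_eq_mul_subset hU
  have hA : BaireMeasurableSet (ψ '' V) :=
    (hVc.analyticSet.image_of_continuous hψ).baireMeasurableSet
  have hA' : ¬IsMeagre (ψ '' V) := by
    intro hm
    obtain ⟨s, hs, hcover⟩ := countable_cover_nhds fun g : G => smul_mem_nhds_self.2 hV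
    have huniv : (univ : Set B) = ⋃ g ∈ s, ψ g • ψ '' V := by
      rw [← hsurj.range_eq, ← image_univ, ← hcover, image_iUnion₂]
      simp only [image_smul_distrib]
    exact not_isMeagre_of_isOpen isOpen_univ univ_nonempty
      (huniv ▸ isMeagre_biUnion hs fun g _ => hm.smul (ψ g))
  refine mem_of_superset (hA.inv_mul_mem_nhds_one hA') ?_
  rintro _ ⟨a, ⟨v, hv, hva⟩, _, ⟨w, hw, rfl⟩, rfl⟩
  refine ⟨v⁻¹ * w, hVU (mul_mem_mul (hVinv ▸ inv_mem_inv.2 hv) hw), ?_⟩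
  rw [map_mul, map_inv, hva, inv_inv]

theorem MonoidHom.exists_nhds_one_preimage_subset_ker_mul {G H : Type*} [Group G]
    [TopologicalSpace G] [IsTopologicalGroup G] [PolishSpace G] [Group H] [TopologicalSpace H]
    [IsTopologicalGroup H] [PolishSpace H] (φ : G →* H) (hφ : Continuous φ)
    (hclosed : IsClosed (Set.range φ)) {U : Set G} (hU : U ∈ 𝓝 1) :
    ∃ V ∈ 𝓝 (1 : H), φ ⁻¹' V ⊆ (φ.ker : Set G) * U := by
  have hc : IsClosed (↑φ.range : Set H) := by rwa [φ.coe_range]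
  have : PolishSpace φ.range := hc.polishSpace
  obtain ⟨V, hV, hVU⟩ := (mem_nhds_subtype _ _ _).1 <|
    φ.rangeRestrict.image_mem_nhds_one_of_surjective (hφ.subtype_mk _)
      φ.rangeRestrict_surjective hU
  refine ⟨V, hV, fun g hg => ?_⟩
  obtain ⟨u, hu, hug⟩ := hVU (show (φ.rangeRestrict g : H) ∈ V from hg)
  refine ⟨g * u⁻¹, ?_, u, hu, inv_mul_cancel_right g u⟩
  rw [SetLike.mem_coe, MonoidHom.mem_ker, map_mul, map_inv, ← φ.coe_rangeRestrict, ← hug]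
  simp

section KernelApproximation

variable {G : Type*} [Group G]

theorem mul_mem_subgroup_mul {K L : Subgroup G} (hKL : K ≤ L) {A : Set G}
    (hA : (L : Set G) ∩ (A * A * A⁻¹) ⊆ K) {t x : G} (ht : t ∈ (K : Set G) * A) (hx : x ∈ A)
    (htx : t * x ∈ (L : Set G) * A) : t * x ∈ (K : Set G) * A := by
  obtain ⟨k, hk, a, ha, rfl⟩ := ht
  obtain ⟨l, hl, u, hu, hlu⟩ := htx
  have hkl : k⁻¹ * l = a * x * u⁻¹ := by
    rw [eq_mul_inv_iff_mul_eq.2 hlu]; group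
  have hklK : k⁻¹ * l ∈ K := hA ⟨L.mul_mem (L.inv_mem (hKL hk)) hl,
    hkl ▸ mul_mem_mul (mul_mem_mul ha hx) (inv_mem_inv.2 hu)⟩
  exact ⟨l, by simpa using K.mul_mem hk hklK, u, hu, hlu⟩

variable [TopologicalSpace G]

theorem NonArchimedeanGroup.exists_subgroup_subset_of_mem_nhds {S : Subgroup G}
    (hS : NonArchimedeanGroup S) {U : Set G} (hU : U ∈ 𝓝 (1 : G)) :
    ∃ K : Subgroup G, K ≤ S ∧ (K : Set G) ⊆ U ∧ ∃ O ∈ 𝓝 (1 : G), (S : Set G) ∩ O ⊆ K := by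
  obtain ⟨K, hKo, hKU⟩ := hS _ (continuous_subtype_val.continuousAt.preimage_mem_nhds hU)
  obtain ⟨O, hO, hOK⟩ := isOpen_induced_iff.1 hKo
  have hO1 : (1 : G) ∈ O := show (1 : S) ∈ Subtype.val ⁻¹' O from hOK ▸ K.one_mem
  refine ⟨K.map S.subtype, Subgroup.map_subtype_le K, ?_, O, hO.mem_nhds hO1, ?_⟩
  · rintro _ ⟨k, hk, rfl⟩
    exact hKU hk
  · rintro g ⟨hgS, hgO⟩
    have hgK : (⟨g, hgS⟩ : S) ∈ Subtype.val ⁻¹' O := hgO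
    exact ⟨⟨g, hgS⟩, hOK ▸ hgK, rfl⟩

variable [IsTopologicalGroup G]

theorem exists_nhds_one_mul_mul_inv_subset {O : Set G} (hO : O ∈ 𝓝 (1 : G)) :
    ∃ A ∈ 𝓝 (1 : G), A * A * A⁻¹ ⊆ O := by
  obtain ⟨V, hV, hVO⟩ := exists_nhds_one_split4 hO
  refine ⟨V ∩ V⁻¹, inter_mem hV (inv_mem_nhds_one G hV), ?_⟩
  rintro _ ⟨_, ⟨a, ha, b, hb, rfl⟩, c, hc, rfl⟩
  simpa using hVO ha.1 hb.1 (by simpa using (mem_inv.1 hc).2) (mem_of_mem_nhds hV)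

end KernelApproximation

theorem leftCauchySeq_of_map {G H : Type*} [Group G] [TopologicalSpace G] [IsTopologicalGroup G]
    [Group H] [TopologicalSpace H] [IsTopologicalGroup H] {φ : G →* H}
    (hφ : ∀ U ∈ 𝓝 (1 : G), ∃ V ∈ 𝓝 (1 : H), φ ⁻¹' V ⊆ (φ.ker : Set G) * U)
    (hker : NonArchimedeanGroup φ.ker) {s : ℕ → G}
    (hs : Tendsto (fun n => (s n)⁻¹ * s (n + 1)) atTop (𝓝 1))
    (hφs : LeftCauchySeq fun n => φ (s n)) : LeftCauchySeq s := by
  rw [leftCauchySeq_iff] at hφs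
  rw [leftCauchySeq_iff']
  intro W hW
  obtain ⟨W₁, hW₁, hW₁W⟩ := exists_nhds_one_split hW
  obtain ⟨K, hK, hKW₁, O, hO, hOK⟩ := hker.exists_subgroup_subset_of_mem_nhds hW₁
  obtain ⟨A, hA, hAO⟩ := exists_nhds_one_mul_mul_inv_subset (inter_mem hO hW₁)
  have hAW₁ : A ⊆ W₁ := fun a ha =>
    (hAO ⟨_, mul_mem_mul ha (mem_of_mem_nhds hA), 1, by simpa using mem_of_mem_nhds hA, by simp⟩).2
  obtain ⟨V, hV, hVA⟩ := hφ A hA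
  obtain ⟨N₁, hN₁⟩ := hφs V hV
  obtain ⟨N₂, hN₂⟩ := eventually_atTop.1 (hs hA)
  set N := max N₁ N₂
  have hKA : ∀ n ≥ N, (s N)⁻¹ * s n ∈ (K : Set G) * A := by
    intro n hn
    induction n, hn using Nat.le_induction with
    | base => exact ⟨1, K.one_mem, 1, mem_of_mem_nhds hA, by simp⟩
    | succ n hn ih =>
      have hstep : (s N)⁻¹ * s (n + 1) = (s N)⁻¹ * s n * ((s n)⁻¹ * s (n + 1)) := by group
      rw [hstep]
      refine mul_mem_subgroup_mul hK (fun g hg => hOK ⟨hg.1, (hAO hg.2).1⟩) ih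
        (hN₂ n (le_of_max_le_right hn)) (hVA ?_)
      rw [← hstep]
      simpa using hN₁ N (le_max_left _ _) (n + 1) (by omega)
  refine ⟨N, fun n hn => ?_⟩
  obtain ⟨k, hk, a, ha, hka⟩ := hKA n hn
  rw [← hka]
  exact hW₁W _ (hKW₁ hk) _ (hAW₁ ha)

theorem partialProd_succ {G : Type*} [Monoid G] (x : ℕ → G) (n : ℕ) :
    partialProd x (n + 1) = partialProd x n * x (n + 1) := by
  rw [partialProd, List.range_succ, List.map_append, List.prod_append]
  simp [partialProd]

theorem map_partialProd {G H : Type*} [Monoid G] [Monoid H] (φ : G →* H) (x : ℕ → G) (n : ℕ) :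
    φ (partialProd x n) = partialProd (fun p => φ (x p)) n := by
  rw [partialProd, partialProd, map_list_prod, List.map_map]
  rfl

/-- If `φ : G → H` is a continuous homomorphism of Polish groups with closed range and
non-archimedean kernel, then for every sequence `x → 1_G` the partial products of `x`
are ι-Cauchy iff the partial products of `φ ∘ x` are ι-Cauchy. -/
theorem stmt_10 (G H : Type*) [Group G] [TopologicalSpace G] [IsTopologicalGroup G]
    [PolishSpace G] [Group H] [TopologicalSpace H] [IsTopologicalGroup H] [PolishSpace H]
    (φ : G →* H) (hφ : Continuous φ) (hclosed : IsClosed (Set.range φ))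
    (hker : NonArchimedeanGroup ↥φ.ker) :
    ∀ x : ℕ → G, Tendsto x atTop (𝓝 1) →
      (IotaCauchy (partialProd x) ↔ IotaCauchy (partialProd (fun p => φ (x p)))) := by
  intro x hx
  have hsteps : Tendsto (fun n => (partialProd x n)⁻¹ * partialProd x (n + 1)) atTop (𝓝 1) := by
    simpa [partialProd_succ] using (tendsto_add_atTop_iff_nat 1).2 hx
  have hmap : partialProd (fun p => φ (x p)) = fun n => φ (partialProd x n) :=
    funext fun n => (map_partialProd φ x n).symm
  rw [iotaCauchy_iff_leftCauchySeq, iotaCauchy_iff_leftCauchySeq, hmap]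
  exact ⟨fun h => h.map hφ, leftCauchySeq_of_map
    (fun _ hU => φ.exists_nhds_one_preimage_subset_ker_mul hφ hclosed hU) hker hsteps⟩
end
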